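/- For every ρ with |ρ| < 1 and every σ̃ > 0, the function f(x) = (1/σ̃)·φ(x/σ̃)·√(2π(1-ρ²))·ψ(-ρx/(√(1-ρ²)·σ̃)) is a probability density, i.e., f ≥ 0 and ∫_{-∞}^{∞} f(x) dx = 1. -/

import Mathlib

open Real MeasureTheory

noncomputable def stdPhi (x : ℝ) : ℝ := (Real.sqrt (2 * Real.pi))⁻¹ * Real.exp (-x ^ 2 / 2)

noncomputable def stdCDF (x : ℝ) : ℝ := ∫ y in Set.Iic x, stdPhi y

noncomputable def psi (x : ℝ) : ℝ := stdPhi x + x * stdCDF x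

noncomputable def peakDensity (ρ σ : ℝ) (x : ℝ) : ℝ :=
  σ⁻¹ * stdPhi (x / σ) * Real.sqrt (2 * Real.pi * (1 - ρ ^ 2)) *
    psi (-ρ * x / (Real.sqrt (1 - ρ ^ 2) * σ))

/-!
Writing ψ(x) = ∫_{y ≤ x} (x - y) φ(y) dy shows ψ ≥ 0. The substitution x = σu turns the density into
σ⁻¹ √(2π(1-ρ²)) φ(u) ψ(au) with a = -ρ/√(1-ρ²), and 1 + a² = 1/(1-ρ²), so it suffices that
∫ φ(u) ψ(au) du = √(1+a²)/√(2π). This follows from the explicit primitive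
-a φ(u) Φ(au) + √(1+a²)/√(2π) Φ(√(1+a²) u), whose derivative is computed with φ' = -uφ, Φ' = φ and
√(2π) φ(u) φ(au) = φ(√(1+a²) u).
-/

open Filter Set ProbabilityTheory Topology

lemma stdPhi_eq_gaussianPDFReal : stdPhi = gaussianPDFReal 0 1 := by
  ext x
  simp [stdPhi, gaussianPDFReal]

lemma stdCDF_eq_cdf : stdCDF = cdf (gaussianReal 0 1) := by
  ext x
  rw [cdf_eq_real, measureReal_def, gaussianReal_apply_eq_integral _ one_ne_zero,
    ENNReal.toReal_ofReal (setIntegral_nonneg measurableSet_Iic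
      fun y _ ↦ gaussianPDFReal_nonneg _ _ y), stdCDF, stdPhi_eq_gaussianPDFReal]

lemma stdPhi_pos (x : ℝ) : 0 < stdPhi x := by
  unfold stdPhi; positivity

lemma stdPhi_le_inv_sqrt_two_pi (x : ℝ) : stdPhi x ≤ (√(2 * π))⁻¹ :=
  mul_le_of_le_one_right (by positivity) (exp_le_one_iff.2 (by nlinarith))

lemma continuous_stdPhi : Continuous stdPhi := by
  unfold stdPhi; fun_prop

lemma integrable_stdPhi : Integrable stdPhi :=
  stdPhi_eq_gaussianPDFReal ▸ integrable_gaussianPDFReal 0 1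

lemma integrable_mul_stdPhi : Integrable fun x ↦ x * stdPhi x := by
  refine ((integrable_mul_exp_neg_mul_sq (b := 1 / 2) (by norm_num)).const_mul
    (√(2 * π))⁻¹).congr (.of_forall fun x ↦ ?_)
  simp only [stdPhi]; ring_nf

lemma hasDerivAt_stdPhi (x : ℝ) : HasDerivAt stdPhi (-x * stdPhi x) x := by
  have h : HasDerivAt (fun y : ℝ ↦ -y ^ 2 / 2) (-x) x :=
    ((hasDerivAt_pow 2 x).fun_neg.div_const 2).congr_deriv (by ring)
  exact (h.exp.const_mul _).congr_deriv (by simp only [stdPhi]; ring)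

lemma tendsto_stdPhi_cocompact : Tendsto stdPhi (cocompact ℝ) (𝓝 0) := by
  have := (tendsto_rpow_abs_mul_exp_neg_mul_sq_cocompact (a := 1 / 2) (by norm_num) 0).const_mul
    (√(2 * π))⁻¹
  rw [mul_zero] at this
  refine this.congr fun x ↦ ?_
  simp only [stdPhi, rpow_zero, one_mul]; ring_nf

lemma stdCDF_nonneg (x : ℝ) : 0 ≤ stdCDF x := stdCDF_eq_cdf ▸ cdf_nonneg _ x

lemma stdCDF_le_one (x : ℝ) : stdCDF x ≤ 1 := stdCDF_eq_cdf ▸ cdf_le_one _ x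

lemma tendsto_stdCDF_atBot : Tendsto stdCDF atBot (𝓝 0) := stdCDF_eq_cdf ▸ tendsto_cdf_atBot _

lemma tendsto_stdCDF_atTop : Tendsto stdCDF atTop (𝓝 1) := stdCDF_eq_cdf ▸ tendsto_cdf_atTop _

lemma hasDerivAt_stdCDF (x : ℝ) : HasDerivAt stdCDF (stdPhi x) x := by
  have hsplit : ∀ y, stdCDF y = stdCDF 0 + ∫ t in (0 : ℝ)..y, stdPhi t := fun y ↦ by
    rw [← intervalIntegral.integral_Iic_sub_Iic integrable_stdPhi.integrableOn
      integrable_stdPhi.integrableOn, stdCDF, stdCDF, add_sub_cancel]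
  refine ((intervalIntegral.integral_hasDerivAt_right integrable_stdPhi.intervalIntegrable
    continuous_stdPhi.aestronglyMeasurable.stronglyMeasurableAtFilter
    continuous_stdPhi.continuousAt).const_add _).congr_of_eventuallyEq (.of_forall hsplit)

lemma integral_Iic_mul_stdPhi (x : ℝ) : ∫ y in Iic x, y * stdPhi y = -stdPhi x := by
  have := integral_Iic_of_hasDerivAt_of_tendsto' (f := fun y ↦ -stdPhi y) (a := x)
    (fun y _ ↦ (hasDerivAt_stdPhi y).neg.congr_deriv (by ring)) integrable_mul_stdPhi.integrableOn
    (by simpa using (tendsto_stdPhi_cocompact.mono_left atBot_le_cocompact).neg)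
  simpa using this

lemma continuous_stdCDF : Continuous stdCDF :=
  continuous_iff_continuousAt.2 fun x ↦ (hasDerivAt_stdCDF x).continuousAt

lemma continuous_psi : Continuous psi :=
  continuous_stdPhi.add (continuous_id.mul continuous_stdCDF)

lemma psi_eq_setIntegral (x : ℝ) : psi x = ∫ y in Iic x, (x - y) * stdPhi y := by
  simp_rw [sub_mul]
  rw [integral_sub (integrable_stdPhi.const_mul x).integrableOn
      integrable_mul_stdPhi.integrableOn, integral_const_mul, integral_Iic_mul_stdPhi, psi, stdCDF]
  ring

lemma psi_nonneg (x : ℝ) : 0 ≤ psi x := by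
  rw [psi_eq_setIntegral]
  exact setIntegral_nonneg measurableSet_Iic fun y hy ↦ mul_nonneg (sub_nonneg.2 hy) (stdPhi_pos y).le

lemma psi_le_inv_sqrt_two_pi_add_abs (x : ℝ) : psi x ≤ (√(2 * π))⁻¹ + |x| := by
  have : x * stdCDF x ≤ |x| := calc
    x * stdCDF x ≤ |x| * stdCDF x := mul_le_mul_of_nonneg_right (le_abs_self x) (stdCDF_nonneg x)
    _ ≤ |x| := mul_le_of_le_one_right (abs_nonneg x) (stdCDF_le_one x)
  linarith [stdPhi_le_inv_sqrt_two_pi x, show psi x = stdPhi x + x * stdCDF x from rfl]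

lemma sqrt_two_pi_mul_stdPhi_mul_stdPhi (a u : ℝ) :
    √(2 * π) * (stdPhi u * stdPhi (a * u)) = stdPhi (√(1 + a ^ 2) * u) := by
  have hsq : (√(1 + a ^ 2) * u) ^ 2 = u ^ 2 + (a * u) ^ 2 := by
    rw [mul_pow, sq_sqrt (by positivity)]; ring
  have hpi : √(2 * π) ≠ 0 := by positivity
  simp only [stdPhi, hsq, add_div, neg_add, exp_add]
  field_simp

noncomputable def phiPsiPrimitive (a u : ℝ) : ℝ :=
  -a * (stdPhi u * stdCDF (a * u)) + √(1 + a ^ 2) / √(2 * π) * stdCDF (√(1 + a ^ 2) * u)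

lemma hasDerivAt_phiPsiPrimitive (a u : ℝ) :
    HasDerivAt (phiPsiPrimitive a) (stdPhi u * psi (a * u)) u := by
  have hΦa := (hasDerivAt_stdCDF (a * u)).comp u ((hasDerivAt_id u).const_mul a)
  have hΦb := (hasDerivAt_stdCDF _).comp u ((hasDerivAt_id u).const_mul √(1 + a ^ 2))
  refine ((((hasDerivAt_stdPhi u).mul hΦa).const_mul (-a)).add (hΦb.const_mul _)).congr_deriv ?_
  rw [← sqrt_two_pi_mul_stdPhi_mul_stdPhi]
  have hpi : √(2 * π) ≠ 0 := by positivity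
  field_simp
  rw [sq_sqrt (by positivity)]
  simp only [psi, Function.comp_apply, id]
  ring

lemma tendsto_stdPhi_mul_stdCDF_comp (g : ℝ → ℝ) :
    Tendsto (fun u ↦ stdPhi u * stdCDF (g u)) (cocompact ℝ) (𝓝 0) :=
  tendsto_of_tendsto_of_tendsto_of_le_of_le tendsto_const_nhds tendsto_stdPhi_cocompact
    (fun u ↦ mul_nonneg (stdPhi_pos u).le (stdCDF_nonneg _))
    (fun u ↦ mul_le_of_le_one_right (stdPhi_pos u).le (stdCDF_le_one _))

lemma tendsto_phiPsiPrimitive_atBot (a : ℝ) : Tendsto (phiPsiPrimitive a) atBot (𝓝 0) := by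
  have hb : 0 < √(1 + a ^ 2) := by positivity
  unfold phiPsiPrimitive
  simpa only [mul_zero, add_zero, Function.comp_apply, id] using
    (((tendsto_stdPhi_mul_stdCDF_comp (a * ·)).mono_left atBot_le_cocompact).const_mul (-a)).add
    ((tendsto_stdCDF_atBot.comp (tendsto_id.const_mul_atBot hb)).const_mul (√(1 + a ^ 2) / √(2 * π)))

lemma tendsto_phiPsiPrimitive_atTop (a : ℝ) :
    Tendsto (phiPsiPrimitive a) atTop (𝓝 (√(1 + a ^ 2) / √(2 * π))) := by
  have hb : 0 < √(1 + a ^ 2) := by positivity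
  unfold phiPsiPrimitive
  simpa only [mul_zero, mul_one, zero_add, Function.comp_apply, id] using
    (((tendsto_stdPhi_mul_stdCDF_comp (a * ·)).mono_left atTop_le_cocompact).const_mul (-a)).add
    ((tendsto_stdCDF_atTop.comp (tendsto_id.const_mul_atTop hb)).const_mul (√(1 + a ^ 2) / √(2 * π)))

lemma integrable_stdPhi_mul_psi (a : ℝ) : Integrable fun u ↦ stdPhi u * psi (a * u) := by
  refine (((integrable_stdPhi.const_mul (√(2 * π))⁻¹).add
    (integrable_mul_stdPhi.abs.const_mul |a|))).mono'
    (continuous_stdPhi.mul (continuous_psi.comp (continuous_const_mul a))).aestronglyMeasurable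
    (.of_forall fun u ↦ ?_)
  rw [norm_of_nonneg (mul_nonneg (stdPhi_pos u).le (psi_nonneg _))]
  calc stdPhi u * psi (a * u) ≤ stdPhi u * ((√(2 * π))⁻¹ + |a * u|) :=
        mul_le_mul_of_nonneg_left (psi_le_inv_sqrt_two_pi_add_abs _) (stdPhi_pos u).le
    _ = (√(2 * π))⁻¹ * stdPhi u + |a| * |u * stdPhi u| := by
        rw [abs_mul, abs_mul, abs_of_pos (stdPhi_pos u)]; ring

lemma integral_stdPhi_mul_psi (a : ℝ) :
    ∫ u, stdPhi u * psi (a * u) = √(1 + a ^ 2) / √(2 * π) := by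
  simpa using integral_of_hasDerivAt_of_tendsto (hasDerivAt_phiPsiPrimitive a)
    (integrable_stdPhi_mul_psi a) (tendsto_phiPsiPrimitive_atBot a) (tendsto_phiPsiPrimitive_atTop a)

lemma peakDensity_eq (ρ σ x : ℝ) : peakDensity ρ σ x =
    σ⁻¹ * √(2 * π) * √(1 - ρ ^ 2) * (stdPhi (x / σ) * psi (-ρ / √(1 - ρ ^ 2) * (x / σ))) := by
  rw [peakDensity, sqrt_mul (by positivity)]
  ring_nf

lemma sqrt_one_add_sq_div_sqrt_one_sub_sq {ρ : ℝ} (hρ : |ρ| < 1) :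
    √(1 + (ρ / √(1 - ρ ^ 2)) ^ 2) = (√(1 - ρ ^ 2))⁻¹ := by
  have hρ2 : 0 < 1 - ρ ^ 2 := sub_pos.2 ((sq_lt_one_iff_abs_lt_one ρ).2 hρ)
  rw [div_pow, sq_sqrt hρ2.le, ← sqrt_inv]
  congr 1
  field_simp
  ring

lemma peakDensity_nonneg {σ : ℝ} (hσ : 0 ≤ σ) (ρ x : ℝ) : 0 ≤ peakDensity ρ σ x := by
  have := psi_nonneg (-ρ * x / (√(1 - ρ ^ 2) * σ))
  have := stdPhi_pos (x / σ)
  unfold peakDensity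
  positivity

theorem peakDensity_isDensity (ρ σ : ℝ) (hρ : |ρ| < 1) (hσ : 0 < σ) :
    (∀ x, 0 ≤ peakDensity ρ σ x) ∧ (∫ x, peakDensity ρ σ x) = 1 := by
  refine ⟨peakDensity_nonneg hσ.le ρ, ?_⟩
  have hs : 0 < √(1 - ρ ^ 2) := sqrt_pos.2 (sub_pos.2 ((sq_lt_one_iff_abs_lt_one ρ).2 hρ))
  simp_rw [peakDensity_eq]
  rw [integral_const_mul, Measure.integral_comp_div (fun u ↦ stdPhi u * psi (_ * u)),
    integral_stdPhi_mul_psi, neg_div, neg_sq, sqrt_one_add_sq_div_sqrt_one_sub_sq hρ,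
    abs_of_pos hσ, smul_eq_mul]
  field_simp
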